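/- Let X and Y be complex Banach spaces, A ∈ B(X), B ∈ B(Y), C ∈ B(Y, X), and let M_C ∈ B(X ⊕ Y) be the upper-triangular operator matrix M_C(x, y) = (Ax + Cy, By). If B is Drazin invertible, then M_C has finite descent if and only if A has finite descent, and M_C has finite ascent if and only if A has finite ascent. -/

import Mathlib

noncomputable section

open ContinuousLinearMap Metric Set

variable {E : Type*} [NormedAddCommGroup E] [NormedSpace ℂ E]
variable {X Y : Type*} [NormedAddCommGroup X] [NormedSpace ℂ X] [CompleteSpace X]
  [NormedAddCommGroup Y] [NormedSpace ℂ Y] [CompleteSpace Y]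

/-- `T` has finite ascent: some power has the same kernel as the next one. -/
def HasFiniteAscent (T : E →L[ℂ] E) : Prop :=
  ∃ k : ℕ, LinearMap.ker ((T ^ k : E →L[ℂ] E) : E →ₗ[ℂ] E) = LinearMap.ker ((T ^ (k + 1) : E →L[ℂ] E) : E →ₗ[ℂ] E)

/-- `T` has finite descent: some power has the same range as the next one. -/
def HasFiniteDescent (T : E →L[ℂ] E) : Prop :=
  ∃ k : ℕ, LinearMap.range ((T ^ k : E →L[ℂ] E) : E →ₗ[ℂ] E) = LinearMap.range ((T ^ (k + 1) : E →L[ℂ] E) : E →ₗ[ℂ] E)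

/-- `T` is Drazin invertible. -/
def IsDrazinInvertible (T : E →L[ℂ] E) : Prop :=
  ∃ S : E →L[ℂ] E, ∃ k : ℕ, T * S = S * T ∧ S * T * S = S ∧ T ^ (k + 1) * S = T ^ k

/-- The upper-triangular operator matrix `M_C (x, y) = (A x + C y, B y)` on `X ⊕ Y`. -/
def ucMat (A : X →L[ℂ] X) (B : Y →L[ℂ] Y) (C : Y →L[ℂ] X) :
    (X × Y) →L[ℂ] (X × Y) :=
  (A.comp (ContinuousLinearMap.fst ℂ X Y) + C.comp (ContinuousLinearMap.snd ℂ X Y)).prod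
    (B.comp (ContinuousLinearMap.snd ℂ X Y))

/-!
A Drazin inverse of `B` forces `asc B ≤ k` and `des B ≤ k`. On `X × 0` the matrix `M_C` acts
as `A`, and `M_C^q` maps into `X × 0` every vector whose second coordinate is killed by `B^q`.
Comparing kernels and ranges of powers through these two facts gives
`asc A ≤ asc M_C ≤ asc A + k` and `des A ≤ des M_C ≤ des A + k`.
-/

/-- `asc T ≤ k` -/
def AscentLE (T : E →L[ℂ] E) (k : ℕ) : Prop :=
  ∀ x, (T ^ (k + 1)) x = 0 → (T ^ k) x = 0

/-- `des T ≤ k` -/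
def DescentLE (T : E →L[ℂ] E) (k : ℕ) : Prop :=
  ∀ x, ∃ y, (T ^ k) x = (T ^ (k + 1)) y

section AscentDescent

variable {T : E →L[ℂ] E} {k m : ℕ}

theorem hasFiniteAscent_iff_exists_ascentLE : HasFiniteAscent T ↔ ∃ k, AscentLE T k := by
  refine exists_congr fun k => ⟨fun h x hx => ?_, fun h => le_antisymm (fun x hx => ?_) ?_⟩
  · exact (SetLike.ext_iff.mp h x).mpr hx
  · rw [LinearMap.mem_ker, coe_coe, pow_succ', mul_apply_eq_comp]
    rw [LinearMap.mem_ker, coe_coe] at hx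
    rw [hx, map_zero]
  · exact h

theorem hasFiniteDescent_iff_exists_descentLE : HasFiniteDescent T ↔ ∃ k, DescentLE T k := by
  refine exists_congr fun k => ⟨fun h x => ?_, fun h => le_antisymm ?_ ?_⟩
  · obtain ⟨y, hy⟩ := h ▸ LinearMap.mem_range_self ((T ^ k : E →L[ℂ] E) : E →ₗ[ℂ] E) x
    exact ⟨y, hy.symm⟩
  · rintro x ⟨y, rfl⟩
    obtain ⟨z, hz⟩ := h y
    exact ⟨z, hz.symm⟩
  · rintro x ⟨y, rfl⟩
    exact ⟨T y, by rw [coe_coe, coe_coe, pow_succ, mul_apply_eq_comp]⟩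

theorem AscentLE.pow_apply_eq_zero (h : AscentLE T k) (hkm : k ≤ m) {x : E}
    (hx : (T ^ m) x = 0) : (T ^ k) x = 0 := by
  obtain ⟨d, rfl⟩ := Nat.exists_eq_add_of_le hkm
  induction d generalizing x with
  | zero => exact hx
  | succ d ih =>
    refine h x ?_
    rw [pow_succ, mul_apply_eq_comp]
    refine ih le_self_add ?_
    rwa [← mul_apply_eq_comp, ← pow_succ, add_assoc]

theorem DescentLE.exists_eq_pow_apply (h : DescentLE T k) (hkm : k ≤ m) (x : E) :
    ∃ y, (T ^ k) x = (T ^ m) y := by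
  obtain ⟨d, rfl⟩ := Nat.exists_eq_add_of_le hkm
  induction d with
  | zero => exact ⟨x, rfl⟩
  | succ d ih =>
    obtain ⟨y, hy⟩ := ih le_self_add
    obtain ⟨z, hz⟩ := h y
    refine ⟨z, ?_⟩
    rw [hy, add_comm k, pow_add, mul_apply_eq_comp, hz, ← mul_apply_eq_comp, ← pow_add,
      add_left_comm]

theorem IsDrazinInvertible.exists_ascentLE_descentLE (hT : IsDrazinInvertible T) :
    ∃ k, AscentLE T k ∧ DescentLE T k := by
  obtain ⟨S, k, hTS, -, hk⟩ := hT
  have hcomm : T ^ (k + 1) * S = S * T ^ (k + 1) := (Commute.pow_left hTS _).eq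
  -- `T^k = S T^(k+1) = T^(k+1) S`
  refine ⟨k, fun x hx => ?_, fun x => ⟨S x, ?_⟩⟩
  · rw [← hk, hcomm, mul_apply_eq_comp, hx, map_zero]
  · rw [← hk, mul_apply_eq_comp]

end AscentDescent

section UpperTriangular

variable {V W : Type*} [NormedAddCommGroup V] [NormedSpace ℂ V] [NormedAddCommGroup W]
  [NormedSpace ℂ W] (A : V →L[ℂ] V) (B : W →L[ℂ] W) (C : W →L[ℂ] V)

theorem ucMat_apply (z : V × W) : ucMat A B C z = (A z.1 + C z.2, B z.2) := rfl

theorem ucMat_pow_apply_inl (n : ℕ) (x : V) : (ucMat A B C ^ n) (x, 0) = ((A ^ n) x, 0) := by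
  induction n with
  | zero => rfl
  | succ n ih =>
    rw [pow_succ', pow_succ', mul_apply_eq_comp, mul_apply_eq_comp, ih, ucMat_apply]
    simp only [map_zero, add_zero]

theorem snd_ucMat_pow_apply (n : ℕ) (z : V × W) : ((ucMat A B C ^ n) z).2 = (B ^ n) z.2 := by
  induction n with
  | zero => rfl
  | succ n ih =>
    rw [pow_succ', pow_succ', mul_apply_eq_comp, mul_apply_eq_comp, ucMat_apply]
    exact congrArg B ih

variable {A B C}

theorem ucMat_pow_add_apply_of_pow_apply_snd_eq_zero {q : ℕ} {z : V × W}
    (hz : (B ^ q) z.2 = 0) (m : ℕ) :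
    (ucMat A B C ^ (m + q)) z = ((A ^ m) ((ucMat A B C ^ q) z).1, 0) := by
  have hsnd : (ucMat A B C ^ q) z = (((ucMat A B C ^ q) z).1, 0) :=
    Prod.ext rfl (by rw [snd_ucMat_pow_apply, hz])
  rw [pow_add, mul_apply_eq_comp, hsnd, ucMat_pow_apply_inl]

theorem ascentLE_of_ucMat {n : ℕ} (h : AscentLE (ucMat A B C) n) : AscentLE A n := by
  intro x hx
  have := h (x, 0) (by rw [ucMat_pow_apply_inl, hx, Prod.mk_zero_zero])
  rw [ucMat_pow_apply_inl] at this
  exact congrArg Prod.fst this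

theorem ascentLE_ucMat_add {p q : ℕ} (hA : AscentLE A p) (hB : AscentLE B q) :
    AscentLE (ucMat A B C) (p + q) := by
  intro z hz
  have hzq : (B ^ q) z.2 = 0 :=
    hB.pow_apply_eq_zero (m := p + q + 1) (by omega)
      (by rw [← snd_ucMat_pow_apply A B C, hz, Prod.snd_zero])
  rw [add_right_comm, ucMat_pow_add_apply_of_pow_apply_snd_eq_zero hzq] at hz
  rw [ucMat_pow_add_apply_of_pow_apply_snd_eq_zero hzq, hA _ (congrArg Prod.fst hz),
    Prod.mk_zero_zero]

theorem descentLE_of_ucMat {n q : ℕ} (hM : DescentLE (ucMat A B C) n) (hB : AscentLE B q) :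
    DescentLE A n := by
  intro x
  obtain ⟨z, hz⟩ := hM.exists_eq_pow_apply (m := n + 1 + q) (by omega) (x, 0)
  rw [ucMat_pow_apply_inl] at hz
  have hzq : (B ^ q) z.2 = 0 :=
    hB.pow_apply_eq_zero (m := n + 1 + q) (by omega) (by rw [← snd_ucMat_pow_apply A B C, ← hz])
  rw [ucMat_pow_add_apply_of_pow_apply_snd_eq_zero hzq] at hz
  exact ⟨_, congrArg Prod.fst hz⟩

theorem descentLE_ucMat_add {p q : ℕ} (hA : DescentLE A p) (hBa : AscentLE B q)
    (hBd : DescentLE B q) : DescentLE (ucMat A B C) (p + q) := by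
  rintro ⟨x, y⟩
  -- `(x, y) = (x - C y', w) + M_C (0, y')` with `w = y - B y' ∈ ker B^(p+q) = ker B^q`
  obtain ⟨y', hy'⟩ := hBd.exists_eq_pow_apply (m := p + q + 1) (by omega) ((B ^ p) y)
  have hw : (B ^ q) (y - B y') = 0 := by
    refine hBa.pow_apply_eq_zero (m := p + q) (by omega) ?_
    have hy : (B ^ (p + q)) y = (B ^ q) ((B ^ p) y) := by
      rw [← mul_apply_eq_comp, ← pow_add, add_comm]
    rw [map_sub, hy, hy', ← mul_apply_eq_comp, ← pow_succ, sub_self]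
  obtain ⟨u, hu⟩ := hA.exists_eq_pow_apply (m := p + q + 1) (by omega)
    ((ucMat A B C ^ q) (x - C y', y - B y')).1
  refine ⟨(u, 0) + (0, y'), ?_⟩
  have hsplit : (x, y) = (x - C y', y - B y') + ucMat A B C (0, y') := by
    rw [ucMat_apply, Prod.mk_add_mk, map_zero, zero_add, sub_add_cancel, sub_add_cancel]
  rw [hsplit, map_add, ucMat_pow_add_apply_of_pow_apply_snd_eq_zero hw, hu, map_add,
    ucMat_pow_apply_inl, ← mul_apply_eq_comp, ← pow_succ]

end UpperTriangular

theorem stmt5 (A : X →L[ℂ] X) (B : Y →L[ℂ] Y) (C : Y →L[ℂ] X) (hB : IsDrazinInvertible B) :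
    (HasFiniteDescent (ucMat A B C) ↔ HasFiniteDescent A) ∧
      (HasFiniteAscent (ucMat A B C) ↔ HasFiniteAscent A) := by
  obtain ⟨k, hBa, hBd⟩ := hB.exists_ascentLE_descentLE
  simp only [hasFiniteDescent_iff_exists_descentLE, hasFiniteAscent_iff_exists_ascentLE]
  refine ⟨⟨?_, ?_⟩, ⟨?_, ?_⟩⟩
  · exact fun ⟨n, hM⟩ => ⟨n, descentLE_of_ucMat hM hBa⟩
  · exact fun ⟨p, hA⟩ => ⟨p + k, descentLE_ucMat_add hA hBa hBd⟩
  · exact fun ⟨n, hM⟩ => ⟨n, ascentLE_of_ucMat hM⟩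
  · exact fun ⟨p, hA⟩ => ⟨p + k, ascentLE_ucMat_add hA hBa⟩
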